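/- arXiv:1701.00778 — 5 statements merged into one kernel-verified Lean document; each statement's English description precedes it below -/
import Mathlib

section
/- Under commutativity, associativity and condition (A), the set of real numbers occurring as entries of the matrices A_1, …, A_n (equivalently, as values a i j k) has at most n elements. -/
open Matrix BigOperators

/-- The coefficients are associative:
`∑_k (a i j k) (a k m p) = ∑_q (a j m q) (a i q p)`. -/
def IsAssocCoeff (n : ℕ) (a : Fin n → Fin n → Fin n → ℝ) : Prop :=
  ∀ i j m p, ∑ k, a i j k * a k m p = ∑ q, a j m q * a i q p

/-- The coefficients are commutative: `a i j k = a j i k`. -/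
def IsCommCoeff (n : ℕ) (a : Fin n → Fin n → Fin n → ℝ) : Prop :=
  ∀ i j k, a i j k = a j i k

/-- Condition (A): the set of columns `{a_{i,j}}` has exactly `n` distinct elements, and for
every `i` the columns of `A_i` (the `j ↦ a_{i,j}`) and of `B_i` (the `j ↦ a_{j,i}`) are
linearly independent. -/
def CondA (n : ℕ) (a : Fin n → Fin n → Fin n → ℝ) : Prop :=
  ({c : Fin n → ℝ | ∃ i j, c = fun k => a i j k}.ncard = n) ∧
  (∀ i, LinearIndependent ℝ (fun j => fun k => a i j k)) ∧
  (∀ i, LinearIndependent ℝ (fun j => fun k => a j i k))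

/-!
View `a` as the structure constants of an algebra on `ℝⁿ`, `e_i e_j = a_{i,j}`, in which
multiplication by `e_i` is the matrix `A_i`. Commutativity and associativity of the coefficients
make this algebra commutative and associative, and `A_{i₀}` is invertible. Since the `n` columns
of `A_{i₀}` are distinct, they are all the columns: every `a_{i,j}` equals some `e_{i₀} e_m`.
Let `g` solve `e_{i₀} g = e_m`. Then `e_{i₀} (g e_l) = e_m e_l = e_{i₀} e_p` for some `p`, so
multiplication by `g` is an injective map sending the basis into itself: a permutation matrix.
As `e_{i₀} e_m = g (e_{i₀} e_{i₀})`, every column `a_{i,j}` is a permutation of `a_{i₀,i₀}`,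
and all coefficients lie among the `n` entries of `a_{i₀,i₀}`.
-/

theorem Matrix.range_mulVec_subset_of_mulVec_single {ι R : Type*} [Fintype ι] [DecidableEq ι]
    [Semiring R] [Nontrivial R] {Q : Matrix ι ι R} (hQ : Function.Injective Q.mulVec)
    (hbasis : ∀ l, ∃ p, Q *ᵥ Pi.single l 1 = Pi.single p 1) (v : ι → R) :
    Set.range (Q *ᵥ v) ⊆ Set.range v := by
  choose σ hσ using hbasis
  have hσinj : Function.Injective σ := fun l l' h => by
    have he : Pi.single l (1 : R) = Pi.single l' 1 := hQ (by rw [hσ, hσ, h])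
    by_contra hne
    simpa [Pi.single_apply, hne] using congrFun he l
  have hentry : ∀ k l, Q k l = (Pi.single (σ l) 1 : ι → R) k := fun k l => by
    rw [← hσ, mulVec_single_one]; rfl
  rintro _ ⟨k, rfl⟩
  obtain ⟨l, rfl⟩ := Finite.surjective_of_injective hσinj k
  refine ⟨l, ?_⟩
  simp [mulVec, dotProduct, hentry, Pi.single_apply, hσinj.eq_iff]

variable {n : ℕ} (a : Fin n → Fin n → Fin n → ℝ)

/-- The matrix `A_i`. -/
def coeffMatrix (i : Fin n) : Matrix (Fin n) (Fin n) ℝ := Matrix.of fun k j => a i j k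

/-- Multiplication by `v` in the algebra on `ℝⁿ` with structure constants `a`,
`e_i e_j = a_{i,j}`. -/
def mulMatrix : (Fin n → ℝ) →ₗ[ℝ] Matrix (Fin n) (Fin n) ℝ :=
  Fintype.linearCombination ℝ (coeffMatrix a)

variable {a}

theorem coeffMatrix_mulVec_single (i j : Fin n) : coeffMatrix a i *ᵥ Pi.single j 1 = a i j := by
  rw [mulVec_single_one]; rfl

theorem mulMatrix_single (k : Fin n) : mulMatrix a (Pi.single k 1) = coeffMatrix a k := by
  simp [mulMatrix]

theorem mulMatrix_apply (v : Fin n → ℝ) (k j : Fin n) :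
    mulMatrix a v k j = ∑ i, v i * a i j k := by
  simp [mulMatrix, Fintype.linearCombination_apply, Matrix.sum_apply, coeffMatrix]

theorem mulMatrix_mulVec_comm (hcomm : IsCommCoeff n a) (v w : Fin n → ℝ) :
    mulMatrix a v *ᵥ w = mulMatrix a w *ᵥ v := by
  ext k
  simp only [mulVec, dotProduct, mulMatrix_apply, Finset.sum_mul]
  rw [Finset.sum_comm]
  exact Finset.sum_congr rfl fun i _ => Finset.sum_congr rfl fun j _ => by rw [hcomm]; ring

theorem mulMatrix_mul (hassoc : IsAssocCoeff n a) (v w : Fin n → ℝ) :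
    mulMatrix a v * mulMatrix a w = mulMatrix a (mulMatrix a v *ᵥ w) := by
  ext p m
  simp only [mul_apply, mulVec, dotProduct, mulMatrix_apply, Finset.sum_mul, Finset.mul_sum]
  conv_lhs => rw [Finset.sum_comm_cycle]
  conv_rhs => rw [Finset.sum_comm_cycle]
  refine Finset.sum_congr rfl fun i _ => ?_
  conv_lhs => rw [Finset.sum_comm]
  conv_rhs => rw [Finset.sum_comm]
  refine Finset.sum_congr rfl fun j _ => ?_
  calc _ = v i * w j * ∑ q, a j m q * a i q p := by
        rw [Finset.mul_sum]; exact Finset.sum_congr rfl fun q _ => by ring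
    _ = _ := by
        rw [← hassoc, Finset.mul_sum]; exact Finset.sum_congr rfl fun k _ => by ring

theorem mulMatrix_mul_comm (hcomm : IsCommCoeff n a) (hassoc : IsAssocCoeff n a)
    (v w : Fin n → ℝ) : mulMatrix a v * mulMatrix a w = mulMatrix a w * mulMatrix a v := by
  rw [mulMatrix_mul hassoc, mulMatrix_mul hassoc, mulMatrix_mulVec_comm hcomm]

theorem coeffMatrix_mulVec_injective {i : Fin n} (hi : LinearIndependent ℝ (a i)) :
    Function.Injective (coeffMatrix a i).mulVec :=
  mulVec_injective_iff.mpr hi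

theorem CondA.exists_coeff_eq (hA : CondA n a) (i₀ i j : Fin n) : ∃ m, a i j = a i₀ m := by
  obtain ⟨hcard, hcols, -⟩ := hA
  have hrange : Set.range (a i₀) = {c | ∃ i j, c = fun k => a i j k} := by
    refine Set.eq_of_subset_of_ncard_le ?_ ?_ ?_
    · rintro _ ⟨m, rfl⟩
      exact ⟨i₀, m, rfl⟩
    · rw [hcard, Set.ncard_range_of_injective (hcols i₀).injective, Nat.card_eq_fintype_card,
        Fintype.card_fin]
    · exact (Set.finite_range fun p : Fin n × Fin n => a p.1 p.2).subset
        fun _ ⟨i, j, hc⟩ => ⟨(i, j), hc.symm⟩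
  obtain ⟨m, hm⟩ : a i j ∈ Set.range (a i₀) := hrange ▸ ⟨i, j, rfl⟩
  exact ⟨m, hm.symm⟩

theorem range_coeff_subset_range_coeff_self (hcomm : IsCommCoeff n a) (hassoc : IsAssocCoeff n a)
    (hcols : ∀ i, LinearIndependent ℝ (a i)) {i₀ : Fin n}
    (hclosed : ∀ i j, ∃ m, a i j = a i₀ m) (m : Fin n) :
    Set.range (a i₀ m) ⊆ Set.range (a i₀ i₀) := by
  have hinj₀ : Function.Injective (coeffMatrix a i₀).mulVec :=
    coeffMatrix_mulVec_injective (hcols i₀)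
  obtain ⟨g, hg⟩ := (mulVec_surjective_iff_isUnit.mpr (mulVec_injective_iff_isUnit.mp hinj₀))
    (Pi.single m 1)
  have hmul : coeffMatrix a i₀ * mulMatrix a g = coeffMatrix a m := by
    rw [← mulMatrix_single i₀, mulMatrix_mul hassoc, mulMatrix_single, hg, mulMatrix_single]
  have hg₀ : mulMatrix a g *ᵥ Pi.single i₀ 1 = Pi.single m 1 := by
    rw [mulMatrix_mulVec_comm hcomm, mulMatrix_single, hg]
  have hbasis : ∀ l, ∃ p, mulMatrix a g *ᵥ Pi.single l 1 = Pi.single p 1 := fun l => by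
    obtain ⟨p, hp⟩ := hclosed m l
    refine ⟨p, hinj₀ ?_⟩
    rw [mulVec_mulVec, hmul, coeffMatrix_mulVec_single, hp, coeffMatrix_mulVec_single]
  have hginj : Function.Injective (mulMatrix a g).mulVec := by
    refine .of_comp (f := (coeffMatrix a i₀).mulVec) ?_
    simpa only [Function.comp_def, mulVec_mulVec, hmul] using
      coeffMatrix_mulVec_injective (hcols m)
  have hcol : a i₀ m = mulMatrix a g *ᵥ a i₀ i₀ := by
    calc a i₀ m = coeffMatrix a i₀ *ᵥ (mulMatrix a g *ᵥ Pi.single i₀ 1) := by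
          rw [hg₀, coeffMatrix_mulVec_single]
      _ = mulMatrix a g *ᵥ (coeffMatrix a i₀ *ᵥ Pi.single i₀ 1) := by
          rw [mulVec_mulVec, mulVec_mulVec, ← mulMatrix_single i₀, mulMatrix_mul_comm hcomm hassoc]
      _ = mulMatrix a g *ᵥ a i₀ i₀ := by rw [coeffMatrix_mulVec_single]
  exact hcol ▸ range_mulVec_subset_of_mulVec_single hginj hbasis _

theorem stmt_1_general (n : ℕ) (hn : 1 ≤ n) (a : Fin n → Fin n → Fin n → ℝ)
    (hcomm : IsCommCoeff n a) (hassoc : IsAssocCoeff n a) (hA : CondA n a) :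
    {v : ℝ | ∃ i j k, a i j k = v}.ncard ≤ n := by
  let i₀ : Fin n := ⟨0, hn⟩
  have hclosed := hA.exists_coeff_eq i₀
  have hsub : {v : ℝ | ∃ i j k, a i j k = v} ⊆ Set.range (a i₀ i₀) := by
    rintro _ ⟨i, j, k, rfl⟩
    obtain ⟨m, hm⟩ := hclosed i j
    exact range_coeff_subset_range_coeff_self hcomm hassoc hA.2.1 hclosed m ⟨k, by rw [hm]⟩
  calc _ ≤ (Set.range (a i₀ i₀)).ncard := Set.ncard_le_ncard hsub (Set.finite_range _)
    _ ≤ n := by simpa [← Nat.card_coe_set_eq] using Finite.card_range_le (a i₀ i₀)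

/-- Under commutativity, associativity and condition (A), at most `n` distinct
real numbers occur as entries of the matrices `A_1, …, A_n`. -/
theorem stmt_1 (n : ℕ) (hn : 1 ≤ n) (a : Fin n → Fin n → Fin n → ℝ)
    (hnonneg : ∀ i j k, 0 ≤ a i j k) (hsum : ∀ i j, ∑ k, a i j k = 1)
    (hcomm : IsCommCoeff n a) (hassoc : IsAssocCoeff n a) (hA : CondA n a) :
    {v : ℝ | ∃ i j k, a i j k = v}.ncard ≤ n :=
  stmt_1_general n hn a hcomm hassoc hA
end

section
/- Under commutativity, associativity and condition (A), all columns a_{i,j} contain the same elements: for all i, j, p, q there exists a permutation σ of Fin n such that a i j k = a p q (σ k) for every k; in particular the multiset of entries of every column of every A_i coincides with the multiset of entries of a_{1,1}. -/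
open Matrix BigOperators

/-!
Fix an index `e`. By condition (A) the `n` independent columns of `A_e` already exhaust the `n`
distinct columns, so for each `i` there is a permutation `σ_i` with `a_{i,j} = a_{e,σ_i j}`.
Associativity and commutativity give `A_e a_{i,j} = A_e (a_{e,j} ∘ σ_i⁻¹)`, and `A_e` is
injective, so `a_{i,j} = a_{e,j} ∘ σ_i⁻¹`. Applying this twice, every column is `a_{e,e}`
composed with a permutation.
-/

theorem CondA.exists_perm_col_eq {n : ℕ} {a : Fin n → Fin n → Fin n → ℝ} (hA : CondA n a)
    (e i : Fin n) :
    ∃ σ : Equiv.Perm (Fin n), ∀ j, a i j = a e (σ j) := by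
  set S : Set (Fin n → ℝ) := {c | ∃ i j, c = fun k => a i j k}
  have hS : S.Finite := Set.finite_of_ncard_ne_zero (by rw [hA.1]; exact e.pos.ne')
  have hrange : Set.range (a e) = S := by
    refine Set.eq_of_subset_of_ncard_le (by rintro _ ⟨m, rfl⟩; exact ⟨e, m, rfl⟩) ?_ hS
    rw [hA.1, ← Set.image_univ, Set.ncard_image_of_injective _ (hA.2.1 e).injective,
      Set.ncard_univ, Nat.card_eq_fintype_card, Fintype.card_fin]
  have hcol : ∀ j, ∃ m, a e m = a i j := fun j =>
    (by rw [hrange]; exact ⟨i, j, rfl⟩ : a i j ∈ Set.range (a e))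
  choose f hf using hcol
  have hf_inj : Function.Injective f := fun j₁ j₂ h =>
    (hA.2.1 i).injective (by simp only [← hf, h])
  exact ⟨Equiv.ofBijective f (Finite.injective_iff_bijective.mp hf_inj), fun j => (hf j).symm⟩

theorem IsAssocCoeff.col_eq_comp_symm {n : ℕ} {a : Fin n → Fin n → Fin n → ℝ}
    (hassoc : IsAssocCoeff n a) (hcomm : IsCommCoeff n a) {e i : Fin n}
    (he : LinearIndependent ℝ (a e)) {σ : Equiv.Perm (Fin n)} (hσ : ∀ j, a i j = a e (σ j))
    (j : Fin n) : a i j = a e j ∘ σ.symm := by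
  refine funext <| Fintype.linearIndependent_iffₛ.mp he _ _ <| funext fun p => ?_
  simp only [Finset.sum_apply, Pi.smul_apply, smul_eq_mul, Function.comp_apply]
  calc ∑ k, a i j k * a e k p
      = ∑ k, a i j k * a k e p := by simp only [hcomm e]
    _ = ∑ q, a e j q * a e (σ q) p := by
        rw [hassoc i j e p]; simp only [hcomm j e, hσ]
    _ = ∑ k, a e j (σ.symm k) * a e k p :=
        Fintype.sum_equiv σ _ _ fun q => by rw [Equiv.symm_apply_apply]

theorem CondA.exists_perm_col_eq_comp {n : ℕ} {a : Fin n → Fin n → Fin n → ℝ} (hA : CondA n a)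
    (hassoc : IsAssocCoeff n a) (hcomm : IsCommCoeff n a) (e i j : Fin n) :
    ∃ τ : Equiv.Perm (Fin n), a i j = a e e ∘ τ := by
  obtain ⟨σi, hσi⟩ := hA.exists_perm_col_eq e i
  obtain ⟨σj, hσj⟩ := hA.exists_perm_col_eq e j
  have he := hA.2.1 e
  refine ⟨σi.symm.trans σj.symm, ?_⟩
  rw [hassoc.col_eq_comp_symm hcomm he hσi, funext (hcomm e j),
    hassoc.col_eq_comp_symm hcomm he hσj, Equiv.coe_trans, Function.comp_assoc]

theorem stmt_2_general (n : ℕ) (hn : 1 ≤ n) (a : Fin n → Fin n → Fin n → ℝ)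
    (hcomm : IsCommCoeff n a) (hassoc : IsAssocCoeff n a) (hA : CondA n a) :
    (∀ i j p q, ∃ σ : Equiv.Perm (Fin n), ∀ k, a i j k = a p q (σ k)) ∧
    (∀ i j, (Finset.univ.val.map fun k => a i j k) =
      (Finset.univ.val.map fun k => a ⟨0, hn⟩ ⟨0, hn⟩ k)) := by
  have hcol := hA.exists_perm_col_eq_comp hassoc hcomm ⟨0, hn⟩
  refine ⟨fun i j p q => ?_, fun i j => ?_⟩
  · obtain ⟨τ₁, h₁⟩ := hcol i j
    obtain ⟨τ₂, h₂⟩ := hcol p q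
    exact ⟨τ₁.trans τ₂.symm, fun k => by simp [h₁, h₂]⟩
  · obtain ⟨τ, hτ⟩ := hcol i j
    rw [hτ, ← Multiset.map_map, Multiset.map_univ_val_equiv]

/-- Under commutativity, associativity and condition (A), all columns `a_{i,j}`
contain the same elements: each is a permutation of any other; in particular the multiset of
entries of every column of every `A_i` coincides with that of `a_{1,1}`. -/
theorem stmt_2 (n : ℕ) (hn : 1 ≤ n) (a : Fin n → Fin n → Fin n → ℝ)
    (hnonneg : ∀ i j k, 0 ≤ a i j k) (hsum : ∀ i j, ∑ k, a i j k = 1)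
    (hcomm : IsCommCoeff n a) (hassoc : IsAssocCoeff n a) (hA : CondA n a) :
    (∀ i j p q, ∃ σ : Equiv.Perm (Fin n), ∀ k, a i j k = a p q (σ k)) ∧
    (∀ i j, (Finset.univ.val.map fun k => a i j k) =
      (Finset.univ.val.map fun k => a ⟨0, hn⟩ ⟨0, hn⟩ k)) :=
  stmt_2_general n hn a hcomm hassoc hA
end

section
/- Under commutativity, associativity, condition (A), and the additional assumption that the nonzero entries of the column a_{1,1} are pairwise distinct, every row of every matrix A_i contains the same elements as the columns: for each i and each row index k, the multiset of entries (a i j k)_{j=1,…,n} of the k-th row of A_i equals the multiset of entries of the column a_{1,1}. -/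
open Matrix BigOperators

/-!
Fix an index `o`. The columns `a r o` are `n` distinct vectors and there are only `n` columns in
all, so every column is one of them: `a i j = a (ρ i j) o`, where `ρ i` and `ρ · j` are
injective, hence bijective. By commutativity `a k m = a o (ρ k m)`, so the associativity relation
`∑ k, a o o k • a k m = ∑ q, a o m q • a o q` compares two combinations of the columns of `A_o`;
their linear independence gives `a o m (ρ k m) = a o o k`. Hence `a i j p = a o (ρ i j) p`
equals `a o o k_j` for the `k_j` with `ρ k_j (ρ i j) = p`, and `j ↦ k_j` is injective.
-/

open Function

theorem Multiset.map_univ_val_comp_of_bijective {α β γ : Type*} [Fintype α] [Fintype β]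
    {σ : α → β} (hσ : Bijective σ) (f : β → γ) :
    Finset.univ.val.map (f ∘ σ) = Finset.univ.val.map f := by
  rw [← Multiset.map_map, (Multiset.bijective_iff_map_univ_eq_univ σ).mp hσ]

section StructureConstants

variable {ι R : Type*} {a : ι → ι → ι → R} {o : ι} {ρ : ι → ι → ι}

theorem injective_rho_right (hρ : ∀ i j, a i j = a (ρ i j) o) {i : ι} (hA : Injective (a i)) :
    Injective (ρ i) :=
  fun j j' h => hA (by rw [hρ i j, hρ i j', h])

theorem injective_rho_left (hρ : ∀ i j, a i j = a (ρ i j) o) {m : ι}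
    (hB : Injective fun k => a k m) : Injective fun k => ρ k m :=
  fun k k' h => hB (by simp only [hρ k m, hρ k' m, h])

variable [Fintype ι] [Semiring R]

theorem apply_rho_eq_apply_self (hcomm : ∀ i j k, a i j k = a j i k)
    (hassoc : ∀ i j m p, ∑ k, a i j k * a k m p = ∑ q, a j m q * a i q p)
    (hρ : ∀ i j, a i j = a (ρ i j) o) (hli : LinearIndependent R (a o)) {m : ι}
    (hB : Injective fun k => a k m) (k : ι) : a o m (ρ k m) = a o o k := by
  let e := Equiv.ofBijective _ (Finite.injective_iff_bijective.mp (injective_rho_left hρ hB))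
  have hcol : ∀ k, a k m = a o (ρ k m) := fun k => by rw [hρ k m]; exact funext (hcomm _ o)
  have hcomb : ∑ q, a o o (e.symm q) • a o q = ∑ q, a o m q • a o q :=
    calc ∑ q, a o o (e.symm q) • a o q = ∑ k, a o o k • a o (ρ k m) := by
          rw [← e.sum_comp]; simp only [Equiv.symm_apply_apply]; rfl
      _ = ∑ k, a o o k • a k m := by simp only [hcol]
      _ = ∑ q, a o m q • a o q := by
          ext p; simpa only [Finset.sum_apply, Pi.smul_apply, smul_eq_mul] using hassoc o o m p
  have := Fintype.linearIndependent_iffₛ.mp hli _ _ hcomb (e k)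
  rwa [Equiv.symm_apply_apply, eq_comm] at this

theorem map_row_eq_map_col (hcomm : ∀ i j k, a i j k = a j i k)
    (hassoc : ∀ i j m p, ∑ k, a i j k * a k m p = ∑ q, a j m q * a i q p)
    (hρ : ∀ i j, a i j = a (ρ i j) o) (hA : ∀ i, Injective (a i))
    (hli : LinearIndependent R (a o)) (hB : ∀ j, Injective fun i => a i j) (i p : ι) :
    (Finset.univ.val.map fun j => a i j p) = Finset.univ.val.map (a o o) := by
  have hrow : (Finset.univ.val.map fun j => a i j p) = Finset.univ.val.map fun m => a o m p := by
    have hρi := Finite.injective_iff_bijective.mp (injective_rho_right hρ (hA i))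
    rw [← Multiset.map_univ_val_comp_of_bijective hρi fun m => a o m p]
    congr 1
    funext j
    rw [Function.comp_apply, hρ i j, hcomm]
  have hsurj m : Surjective fun k => ρ k m :=
    (Finite.injective_iff_bijective.mp (injective_rho_left hρ (hB m))).surjective
  let g m := surjInv (hsurj m) p
  have hg m : ρ (g m) m = p := surjInv_eq (hsurj m) p
  have hg_inj : Injective g := fun m m' h =>
    injective_rho_right hρ (hA (g m)) ((hg m).trans (h ▸ hg m').symm)
  rw [hrow, ← Multiset.map_univ_val_comp_of_bijective
    (Finite.injective_iff_bijective.mp hg_inj) (a o o)]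
  congr 1
  funext m
  rw [Function.comp_apply, ← apply_rho_eq_apply_self hcomm hassoc hρ hli (hB m) (g m), hg]

end StructureConstants

theorem CondA.exists_eq_col {n : ℕ} {a : Fin n → Fin n → Fin n → ℝ} (hA : CondA n a)
    (o i j : Fin n) : ∃ r, a i j = a r o := by
  set S := {c : Fin n → ℝ | ∃ i j, c = fun k => a i j k}
  have hS : S = Set.range fun ij : Fin n × Fin n => a ij.1 ij.2 := by
    ext c
    simp only [S, Set.mem_ofPred_eq, Set.mem_range, Prod.exists]
    exact exists₂_congr fun _ _ => eq_comm
  have hsub : Set.range (fun r => a r o) ⊆ S := by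
    rintro _ ⟨r, rfl⟩
    exact ⟨r, o, rfl⟩
  have hcard : (Set.range fun r => a r o).ncard = n := by
    rw [← Set.image_univ, Set.ncard_image_of_injective _ (hA.2.2 o).injective, Set.ncard_univ,
      Nat.card_eq_fintype_card, Fintype.card_fin]
  have hrange := Set.eq_of_subset_of_ncard_le hsub (by rw [hcard, hA.1])
    (hS ▸ Set.finite_range _)
  obtain ⟨r, hr⟩ : a i j ∈ Set.range fun r => a r o := hrange ▸ ⟨i, j, rfl⟩
  exact ⟨r, hr.symm⟩

theorem stmt_4_general (n : ℕ) (hn : 1 ≤ n) (a : Fin n → Fin n → Fin n → ℝ)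
    (hcomm : IsCommCoeff n a) (hassoc : IsAssocCoeff n a) (hA : CondA n a) :
    ∀ i k, (Finset.univ.val.map fun j => a i j k) =
      (Finset.univ.val.map fun k' => a ⟨0, hn⟩ ⟨0, hn⟩ k') := by
  choose ρ hρ using hA.exists_eq_col ⟨0, hn⟩
  exact map_row_eq_map_col hcomm hassoc hρ (fun i => (hA.2.1 i).injective) (hA.2.1 _)
    (fun j => (hA.2.2 j).injective)

/-- Under commutativity, associativity, condition (A), and the assumption that
the nonzero entries of the column `a_{1,1}` are pairwise distinct, every row of every `A_i`
contains the same elements as the columns: the multiset of entries of the `k`-th row of `A_i`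
equals the multiset of entries of the column `a_{1,1}`. -/
theorem stmt_4 (n : ℕ) (hn : 1 ≤ n) (a : Fin n → Fin n → Fin n → ℝ)
    (hnonneg : ∀ i j k, 0 ≤ a i j k) (hsum : ∀ i j, ∑ k, a i j k = 1)
    (hcomm : IsCommCoeff n a) (hassoc : IsAssocCoeff n a) (hA : CondA n a)
    (hdist : ∀ k k' : Fin n, a ⟨0, hn⟩ ⟨0, hn⟩ k ≠ 0 → a ⟨0, hn⟩ ⟨0, hn⟩ k' ≠ 0 →
      a ⟨0, hn⟩ ⟨0, hn⟩ k = a ⟨0, hn⟩ ⟨0, hn⟩ k' → k = k') :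
    ∀ i k, (Finset.univ.val.map fun j => a i j k) =
      (Finset.univ.val.map fun k' => a ⟨0, hn⟩ ⟨0, hn⟩ k') :=
  stmt_4_general n hn a hcomm hassoc hA
end

section
/- Under commutativity, associativity, condition (A), and the additional assumption that the nonzero entries of the column a_{1,1} are pairwise distinct, for every nonzero real value v occurring as an entry of some A_i the following Latin-square property holds: for all i, k there exists exactly one j with a i j k = v, and for all j, k there exists exactly one i with a i j k = v. -/
/-!
Fix `e = 0`. By (A) the `n` columns `a_{m,e}` are pairwise distinct and there are only `n`
columns altogether, so `a_{i,j} = a_{i·j,e}` for an operation `·` on indices; it is commutative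
and, by independence of the columns of each `A_i`, a Latin square. Associativity, read through
the injective map `A_e`, gives `a_{e,m}(k·m) = a_{e,e}(k)`, i.e. `a_{i,j}(k·(i·j)) = a_{e,e}(k)`.
A nonzero value `v` occurs in `a_{e,e}` at a single `k`, so `a_{i,j}(p) = v` iff `k·(i·j) = p`,
and the Latin-square property of `·` transfers to `v`.
-/

open Matrix BigOperators

open Function

namespace CondA

variable {n : ℕ} {a : Fin n → Fin n → Fin n → ℝ}

theorem exists_op (hA : CondA n a) (e : Fin n) :
    ∃ op : Fin n → Fin n → Fin n, ∀ i j, a (op i j) e = a i j := by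
  have hinj : Injective fun m => a m e := (hA.2.2 e).injective
  have hrange : Set.range (fun m => a m e) = {c | ∃ i j, c = fun k => a i j k} := by
    refine Set.eq_of_subset_of_ncard_le ?_ ?_ ?_
    · rintro _ ⟨m, rfl⟩
      exact ⟨m, e, rfl⟩
    · rw [hA.1, Set.ncard_range_of_injective hinj, Nat.card_eq_fintype_card, Fintype.card_fin]
    · refine (Set.finite_range fun p : Fin n × Fin n => a p.1 p.2).subset ?_
      rintro _ ⟨i, j, rfl⟩
      exact ⟨(i, j), rfl⟩
  choose op hop using fun i j => hrange.symm.subset ⟨i, j, rfl⟩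
  exact ⟨op, hop⟩

variable {op : Fin n → Fin n → Fin n} {e : Fin n}

theorem op_right_bijective (hA : CondA n a) (hop : ∀ i j, a (op i j) e = a i j) (i : Fin n) :
    Bijective (op i) :=
  Finite.injective_iff_bijective.mp fun j j' h =>
    (hA.2.1 i).injective (by rw [← hop i j, ← hop i j', h])

theorem op_comm (hcomm : IsCommCoeff n a) (hA : CondA n a)
    (hop : ∀ i j, a (op i j) e = a i j) (i j : Fin n) : op i j = op j i :=
  (hA.2.2 e).injective <| by
    simp only [hop]
    exact funext (hcomm i j)

theorem op_left_bijective (hcomm : IsCommCoeff n a) (hA : CondA n a)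
    (hop : ∀ i j, a (op i j) e = a i j) (j : Fin n) : Bijective fun i => op i j := by
  simpa only [op_comm hcomm hA hop _ j] using op_right_bijective hA hop j

theorem apply_op_left (hassoc : IsAssocCoeff n a) (hcomm : IsCommCoeff n a) (hA : CondA n a)
    (hop : ∀ i j, a (op i j) e = a i j) (m k : Fin n) : a e m (op k m) = a e e k := by
  set σ := Equiv.ofBijective _ (op_left_bijective hcomm hA hop m)
  have hcol : ∀ k, a k m = a e (σ k) := fun k => by
    rw [Equiv.ofBijective_apply, ← hop k m]
    exact funext (hcomm _ e)
  -- both sides have the same image under `A_e`, by associativity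
  have hrow : a e m = fun q => a e e (σ.symm q) := by
    refine funext <| Fintype.linearIndependent_iffₛ.mp (hA.2.1 e) _ _ ?_
    funext p
    simp only [Finset.sum_apply, Pi.smul_apply, smul_eq_mul]
    calc ∑ q, a e m q * a e q p
        = ∑ k, a e e k * a k m p := (hassoc e e m p).symm
      _ = ∑ k, a e e (σ.symm (σ k)) * a e (σ k) p := by simp only [hcol, σ.symm_apply_apply]
      _ = ∑ q, a e e (σ.symm q) * a e q p := σ.sum_comp fun q => a e e (σ.symm q) * a e q p
  exact (congrFun hrow (σ k)).trans (congrArg _ (σ.symm_apply_apply k))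

theorem apply_op_op (hassoc : IsAssocCoeff n a) (hcomm : IsCommCoeff n a) (hA : CondA n a)
    (hop : ∀ i j, a (op i j) e = a i j) (i j k : Fin n) : a i j (op k (op i j)) = a e e k := by
  rw [← apply_op_left hassoc hcomm hA hop, ← hop i j]
  exact hcomm _ _ _

end CondA

theorem stmt_5_general (n : ℕ) (hn : 1 ≤ n) (a : Fin n → Fin n → Fin n → ℝ)
    (hcomm : IsCommCoeff n a) (hassoc : IsAssocCoeff n a) (hA : CondA n a)
    (hdist : ∀ k k' : Fin n, a ⟨0, hn⟩ ⟨0, hn⟩ k ≠ 0 → a ⟨0, hn⟩ ⟨0, hn⟩ k' ≠ 0 →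
      a ⟨0, hn⟩ ⟨0, hn⟩ k = a ⟨0, hn⟩ ⟨0, hn⟩ k' → k = k') :
    ∀ v : ℝ, v ≠ 0 → (∃ i j k, a i j k = v) →
      (∀ i k, ∃! j, a i j k = v) ∧ (∀ j k, ∃! i, a i j k = v) := by
  set e : Fin n := ⟨0, hn⟩
  obtain ⟨op, hop⟩ := hA.exists_op e
  have hval := hA.apply_op_op hassoc hcomm hop
  have hleft := hA.op_left_bijective hcomm hop
  have hright := hA.op_right_bijective hop
  rintro v hv ⟨i₀, j₀, k₀, hv₀⟩
  obtain ⟨g, hg⟩ := (hleft (op i₀ j₀)).surjective k₀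
  have hgv : a e e g = v := by rw [← hv₀, ← hg, hval]
  have hiff : ∀ i j k, a i j k = v ↔ op g (op i j) = k := by
    refine fun i j k => ⟨fun h => ?_, fun h => by rw [← h, hval, hgv]⟩
    obtain ⟨g', rfl⟩ := (hleft (op i j)).surjective k
    rw [hval] at h
    rw [hdist g' g (h ▸ hv) (hgv ▸ hv) (h.trans hgv.symm)]
  simp only [hiff]
  exact ⟨fun i => ((hright g).comp (hright i)).existsUnique,
    fun j => ((hright g).comp (hleft j)).existsUnique⟩

/-- Under commutativity, associativity, condition (A), and pairwise-distinct
nonzero entries of `a_{1,1}`, each nonzero entry value `v` has the Latin-square property: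
for all `i, k` there is exactly one `j` with `a i j k = v`, and for all `j, k` exactly one
`i` with `a i j k = v`. -/
theorem stmt_5 (n : ℕ) (hn : 1 ≤ n) (a : Fin n → Fin n → Fin n → ℝ)
    (hnonneg : ∀ i j k, 0 ≤ a i j k) (hsum : ∀ i j, ∑ k, a i j k = 1)
    (hcomm : IsCommCoeff n a) (hassoc : IsAssocCoeff n a) (hA : CondA n a)
    (hdist : ∀ k k' : Fin n, a ⟨0, hn⟩ ⟨0, hn⟩ k ≠ 0 → a ⟨0, hn⟩ ⟨0, hn⟩ k' ≠ 0 →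
      a ⟨0, hn⟩ ⟨0, hn⟩ k = a ⟨0, hn⟩ ⟨0, hn⟩ k' → k = k') :
    ∀ v : ℝ, v ≠ 0 → (∃ i j k, a i j k = v) →
      (∀ i k, ∃! j, a i j k = v) ∧ (∀ j k, ∃! i, a i j k = v) :=
  stmt_5_general n hn a hcomm hassoc hA hdist
end

section
/- (Main result, converse direction: semihypergroup laws) Let · be a commutative group structure on Fin n with regular representation matrices G_k, let m be a probability vector (m_k ≥ 0, ∑_k m_k = 1), and set M = ∑_k m_k · G_k. Define a i j k := (M * G_i)_{k,j}. Then a i j k ≥ 0 and ∑_k a i j k = 1 for all i, j; the coefficients are commutative (a i j k = a j i k for all i, j, k); and they are associative (∑_k (a i j k) · (a k m p) = ∑_q (a j m q) · (a i q p) for all i, j, m, p). -/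
/-!
Right multiplication by `G_i` reindexes columns, so `a i j k = M k (i * j)`, where the matrix
`M = ∑ m_t G_t` has entries `M k c = ∑_{t * c = k} m t`. Summing a function against a column of
`M` therefore averages it over the translates `t * c` with weights `m t`. This gives the
normalisation, and reduces associativity to `t * (i * j) * w = i * (t * (j * w))`, which holds in
any commutative semigroup.
-/

variable {S R : Type*} [Fintype S] [DecidableEq S]

section RegularRepresentation

variable [Mul S]

variable (R) in
def regularRepMatrix [Zero R] [One R] (k : S) : Matrix S S R :=
  Matrix.of fun p j => if p = k * j then 1 else 0

def convMatrix [NonAssocSemiring R] (m : S → R) : Matrix S S R :=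
  ∑ t, m t • regularRepMatrix R t

variable [NonAssocSemiring R]

theorem mul_regularRepMatrix_apply (A : Matrix S S R) (i k j : S) :
    (A * regularRepMatrix R i) k j = A k (i * j) := by
  simp [regularRepMatrix, Matrix.mul_apply]

theorem convMatrix_apply (m : S → R) (p j : S) :
    convMatrix m p j = ∑ t with p = t * j, m t := by
  simp [convMatrix, regularRepMatrix, Matrix.sum_apply, Finset.sum_filter]

theorem sum_convMatrix_apply_mul (m : S → R) (c : S) (f : S → R) :
    ∑ k, convMatrix m k c * f k = ∑ t, m t * f (t * c) := by
  simp only [convMatrix_apply, Finset.sum_filter, ite_mul, zero_mul, Finset.sum_mul]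
  rw [Finset.sum_comm]
  simp

theorem sum_convMatrix_apply (m : S → R) (c : S) : ∑ k, convMatrix m k c = ∑ t, m t := by
  simpa using sum_convMatrix_apply_mul m c 1

theorem convMatrix_apply_nonneg [PartialOrder R] [IsOrderedAddMonoid R] {m : S → R}
    (hm : ∀ k, 0 ≤ m k) (p j : S) : 0 ≤ convMatrix m p j := by
  rw [convMatrix_apply]
  exact Finset.sum_nonneg fun t _ => hm t

end RegularRepresentation

theorem sum_convMatrix_mul_convMatrix_assoc [CommSemigroup S] [NonAssocSemiring R]
    (m : S → R) (i j w p : S) :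
    ∑ k, convMatrix m k (i * j) * convMatrix m p (k * w) =
      ∑ q, convMatrix m q (j * w) * convMatrix m p (i * q) := by
  rw [sum_convMatrix_apply_mul, sum_convMatrix_apply_mul]
  refine Fintype.sum_congr _ _ fun t => ?_
  congr 2
  ac_rfl

theorem stmt_10_general (n : ℕ) (hn : 1 ≤ n)
    (m : Fin n → ℝ) (hm : ∀ k, 0 ≤ m k) (hm1 : ∑ k, m k = 1) :
    let G : Fin n → Matrix (Fin n) (Fin n) ℝ :=
      fun k => Matrix.of fun p j => if p = k * j then (1 : ℝ) else 0
    let M : Matrix (Fin n) (Fin n) ℝ := ∑ k, m k • G k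
    let a : Fin n → Fin n → Fin n → ℝ := fun i j k => (M * G i) k j
    (∀ i j k, 0 ≤ a i j k) ∧
    (∀ i j, ∑ k, a i j k = 1) ∧
    (∀ i j k, a i j k = a j i k) ∧
    (∀ i j w p, ∑ k, a i j k * a k w p = ∑ q, a j w q * a i q p) := by
  -- `*` on `Fin n` is `Fin.instMul`, commutative and associative via `CommRing (Fin n)`
  have : NeZero n := ⟨Nat.one_le_iff_ne_zero.mp hn⟩
  intro G M a
  have ha : ∀ i j k, a i j k = convMatrix m k (i * j) := fun i j k =>
    mul_regularRepMatrix_apply (convMatrix m) i k j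
  simp only [ha]
  exact ⟨fun i j k => convMatrix_apply_nonneg hm k (i * j),
    fun i j => (sum_convMatrix_apply m _).trans hm1,
    fun i j k => by rw [mul_comm i j],
    sum_convMatrix_mul_convMatrix_assoc m⟩

/-- Main result, converse direction: semihypergroup laws: given a commutative
group structure on `Fin n` with regular representation matrices `G_k` and a probability
vector `m`, with `M = ∑_k m_k • G_k` and `a i j k := (M * G_i)_{k,j}`, the coefficients are
nonnegative, sum to `1` in `k`, and are commutative and associative. -/
theorem stmt_10 (n : ℕ) (hn : 1 ≤ n) [CommGroup (Fin n)]
    (m : Fin n → ℝ) (hm : ∀ k, 0 ≤ m k) (hm1 : ∑ k, m k = 1) :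
    let G : Fin n → Matrix (Fin n) (Fin n) ℝ :=
      fun k => Matrix.of fun p j => if p = k * j then (1 : ℝ) else 0
    let M : Matrix (Fin n) (Fin n) ℝ := ∑ k, m k • G k
    let a : Fin n → Fin n → Fin n → ℝ := fun i j k => (M * G i) k j
    (∀ i j k, 0 ≤ a i j k) ∧
    (∀ i j, ∑ k, a i j k = 1) ∧
    (∀ i j k, a i j k = a j i k) ∧
    (∀ i j w p, ∑ k, a i j k * a k w p = ∑ q, a j w q * a i q p) :=
  stmt_10_general n hn m hm hm1
end
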